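/- arXiv:2305.04907 — 2 statements merged into one kernel-verified Lean document; each statement's English description precedes it below -/
import Mathlib

section
/- Let S be a blocking semioval with exactly 25 points in PG(2,11) having a 10-secant line ℓ, let Q and R be the two points of ℓ not in S, and let S_Q (respectively S_R) be the set of points of S not on ℓ whose unique tangent line to S passes through Q (respectively R). Then |S_Q| + |S_R| = 15, |S_Q| ≥ 7, and |S_R| ≥ 7; consequently one of |S_Q|, |S_R| equals 7 and the other equals 8. -/
instance : Fact (Nat.Prime 11) := ⟨by norm_num⟩

/-- The points of `PG(2,11)`: the projectivization of `(ZMod 11)^3`. -/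
abbrev PGPoint : Type := Projectivization (ZMod 11) (Fin 3 → ZMod 11)

/-- The lines of `PG(2,11)`: the 2-dimensional subspaces of `(ZMod 11)^3`. -/
abbrev PGLine : Type :=
  {W : Submodule (ZMod 11) (Fin 3 → ZMod 11) // Module.finrank (ZMod 11) W = 2}

/-- Incidence: a point lies on a line when its representing 1-dimensional
subspace is contained in the line's 2-dimensional subspace. -/
def PGmem (P : PGPoint) (L : PGLine) : Prop := Projectivization.submodule P ≤ L.val

/-- The set of points lying on a line. -/
def linePts (L : PGLine) : Set PGPoint := {P | PGmem P L}

/-- The set of points of `S` lying on the line `L`. -/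
def secantPts (S : Set PGPoint) (L : PGLine) : Set PGPoint := {P ∈ S | PGmem P L}

/-- A line is a `k`-secant to `S` if it meets `S` in exactly `k` points. -/
def IsSecant (S : Set PGPoint) (k : ℕ) (L : PGLine) : Prop := (secantPts S L).ncard = k

/-- A tangent line to `S` is a 1-secant. -/
def IsTangent (S : Set PGPoint) (L : PGLine) : Prop := IsSecant S 1 L

/-- A blocking set: every line meets `S`, but `S` contains no line. -/
def IsBlockingSet (S : Set PGPoint) : Prop :=
  (∀ L : PGLine, (secantPts S L).Nonempty) ∧ ∀ L : PGLine, ¬ linePts L ⊆ S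

/-- A semioval: every point of `S` lies on exactly one tangent line to `S`. -/
def IsSemioval (S : Set PGPoint) : Prop :=
  ∀ P ∈ S, ∃! L : PGLine, PGmem P L ∧ IsTangent S L

/-- A blocking semioval is both a blocking set and a semioval. -/
def IsBlockingSemioval (S : Set PGPoint) : Prop := IsBlockingSet S ∧ IsSemioval S

/-!
The line `ℓ` has 12 points, 10 of them in `S`, so `Q` and `R` are its only points off `S`. The
tangent at a point `P ∈ S \ ℓ` meets `ℓ` in a point off `S`, hence in `Q` or `R`, and not in both
since the line `QR = ℓ` is not tangent: `S_Q` and `S_R` partition the 15 points of `S \ ℓ`.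

For `X ∈ {Q, R}`, joining `X` to the points of `S` identifies `S_X` with the set of tangent lines
through `X`. The 11 lines through `X` other than `ℓ` partition `S \ ℓ`; since `S` is blocking each
meets it, and each non-tangent one in at least two points. With `τ` tangents through `X` this gives
`15 ≥ τ + 2 (11 - τ)`, i.e. `|S_X| = τ ≥ 7`.
-/

open Module Finset
open scoped LinearAlgebra.Projectivization

namespace Projectivization

variable {K V : Type*} [DivisionRing K] [AddCommGroup V] [Module K V]

theorem finrank_sup_submodule_eq_two {P P' : ℙ K V} (h : P ≠ P') :
    finrank K (P.submodule ⊔ P'.submodule : Submodule K V) = 2 := by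
  induction P using ind with | h u hu =>
  induction P' using ind with | h v hv =>
  rw [← independent_pair_iff_ne, independent_mk_iff_LinearIndependent] at h
  rw [submodule_mk, submodule_mk, ← Submodule.span_insert, ← Matrix.range_cons_cons_empty u v ![],
    finrank_span_eq_card h, Fintype.card_fin]

theorem ncard_setOf_submodule_le [Finite K] {W : Submodule K V} (hW : finrank K W = 2) :
    {P : ℙ K V | P.submodule ≤ W}.ncard = Nat.card K + 1 := by
  have hrange : Set.range (map W.subtype W.injective_subtype) = {P | P.submodule ≤ W} := by
    ext P
    constructor
    · rintro ⟨p, rfl⟩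
      induction p using ind with | h w hw =>
      simp [map_mk, submodule_mk, Submodule.span_singleton_le_iff_mem]
    · intro hP
      induction P using ind with | h v hv =>
      rw [Set.mem_ofPred_eq, submodule_mk, Submodule.span_singleton_le_iff_mem] at hP
      exact ⟨mk K ⟨v, hP⟩ (by simpa using hv), rfl⟩
  rw [← hrange, Set.ncard_range_of_injective (map_injective _ _), card_of_finrank_two K W hW]

end Projectivization

theorem Finset.two_mul_card_le_sum_add_card_filter_eq_one {ι : Type*} {s : Finset ι} {f : ι → ℕ}
    (hf : ∀ i ∈ s, 1 ≤ f i) : 2 * s.card ≤ ∑ i ∈ s, f i + #{i ∈ s | f i = 1} := by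
  rw [Finset.card_filter, ← Finset.sum_add_distrib, mul_comm, ← smul_eq_mul, ← Finset.sum_const]
  refine Finset.sum_le_sum fun i hi => ?_
  have := hf i hi
  split_ifs <;> omega

instance : Finite PGPoint := by unfold PGPoint Projectivization; infer_instance

instance : Finite PGLine :=
  Finite.of_injective (fun L : PGLine => L.val) Subtype.val_injective

noncomputable instance : Fintype PGLine := Fintype.ofFinite _

def join (P P' : PGPoint) (h : P ≠ P') : PGLine :=
  ⟨P.submodule ⊔ P'.submodule, Projectivization.finrank_sup_submodule_eq_two h⟩

theorem PGmem_join_left {P P' : PGPoint} (h : P ≠ P') : PGmem P (join P P' h) := le_sup_left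

theorem PGmem_join_right {P P' : PGPoint} (h : P ≠ P') : PGmem P' (join P P' h) := le_sup_right

theorem join_eq {P P' : PGPoint} (h : P ≠ P') {L : PGLine} (hPL : PGmem P L) (hP'L : PGmem P' L) :
    join P P' h = L :=
  Subtype.ext <| Submodule.eq_of_le_of_finrank_eq (sup_le hPL hP'L) <| by
    rw [(join P P' h).prop, L.prop]

theorem eq_of_PGmem_of_PGmem {L M : PGLine} (hLM : L ≠ M) {P P' : PGPoint}
    (hPL : PGmem P L) (hPM : PGmem P M) (hP'L : PGmem P' L) (hP'M : PGmem P' M) : P = P' := by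
  by_contra h
  exact hLM ((join_eq h hPL hP'L).symm.trans (join_eq h hPM hP'M))

theorem exists_PGmem_PGmem (L M : PGLine) : ∃ P : PGPoint, PGmem P L ∧ PGmem P M := by
  have hsup : finrank (ZMod 11) (L.val ⊔ M.val : Submodule _ _) ≤ 3 := by
    simpa using Submodule.finrank_le (L.val ⊔ M.val)
  have hdim := Submodule.finrank_sup_add_finrank_inf_eq L.val M.val
  rw [L.prop, M.prop] at hdim
  obtain ⟨v, hv, hv0⟩ := Submodule.exists_mem_ne_zero_of_ne_bot (p := L.val ⊓ M.val) fun hbot => by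
    rw [hbot, finrank_bot] at hdim
    omega
  refine ⟨Projectivization.mk _ v hv0, ?_, ?_⟩ <;>
    simp only [PGmem, Projectivization.submodule_mk, Submodule.span_singleton_le_iff_mem]
  exacts [(Submodule.mem_inf.mp hv).1, (Submodule.mem_inf.mp hv).2]

theorem exists_not_PGmem (Q : PGPoint) : ∃ M : PGLine, ¬ PGmem Q M := by
  obtain ⟨W, hW⟩ := Submodule.exists_isCompl Q.submodule
  have hrank : finrank (ZMod 11) W = 2 := by
    have := Submodule.finrank_add_eq_of_isCompl hW
    rw [Projectivization.finrank_submodule, finrank_fin_fun] at this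
    omega
  refine ⟨⟨W, hrank⟩, fun hQW => ?_⟩
  have : Q.submodule = ⊥ := le_bot_iff.mp (hW.inf_eq_bot ▸ le_inf le_rfl hQW)
  have h1 := Q.finrank_submodule
  rw [this, finrank_bot] at h1
  exact zero_ne_one h1

theorem ncard_linePts (L : PGLine) : (linePts L).ncard = 12 := by
  simp only [linePts, PGmem]
  rw [Projectivization.ncard_setOf_submodule_le L.prop, Nat.card_zmod]

open Classical in
noncomputable def pencil (X : PGPoint) : Finset PGLine := {L | PGmem X L}

theorem mem_pencil {X : PGPoint} {L : PGLine} : L ∈ pencil X ↔ PGmem X L := by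
  simp [pencil]

theorem card_pencil (X : PGPoint) : (pencil X).card = 12 := by
  obtain ⟨M, hXM⟩ := exists_not_PGmem X
  have hne {Y : PGPoint} (hY : Y ∈ linePts M) : X ≠ Y := fun h => hXM (h ▸ hY)
  rw [← ncard_linePts M, ← Set.ncard_coe_finset]
  refine (Set.ncard_congr (fun Y hY => join X Y (hne hY)) (fun Y hY => ?_)
    (fun Y Y' hY hY' h => ?_) (fun L hL => ?_)).symm
  · exact mem_pencil.mpr (PGmem_join_left _)
  · have hjM : join X Y (hne hY) ≠ M := fun h => hXM (h ▸ PGmem_join_left _)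
    exact eq_of_PGmem_of_PGmem hjM (PGmem_join_right _) hY (h ▸ PGmem_join_right _) hY'
  · obtain ⟨Y, hYL, hYM⟩ := exists_PGmem_PGmem L M
    exact ⟨Y, hYM, join_eq _ (mem_pencil.mp hL) hYL⟩

theorem eq_of_isTangent {S : Set PGPoint} {t : PGLine} (ht : IsTangent S t) {P P' : PGPoint}
    (hP : P ∈ S) (hPt : PGmem P t) (hP' : P' ∈ S) (hP't : PGmem P' t) : P = P' := by
  obtain ⟨A, hA⟩ := Set.ncard_eq_one.mp ht
  have h1 : P ∈ secantPts S t := ⟨hP, hPt⟩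
  have h2 : P' ∈ secantPts S t := ⟨hP', hP't⟩
  rw [hA] at h1 h2
  exact h1.trans h2.symm

theorem ncard_eq_sum_pencil {S : Set PGPoint} {X : PGPoint} (hX : X ∉ S) :
    S.ncard = ∑ m ∈ pencil X, (secantPts S m).ncard := by
  have hcover : S = ⋃ m ∈ (pencil X : Set PGLine), secantPts S m := by
    ext P
    simp only [Set.mem_iUnion, Finset.mem_coe, mem_pencil, exists_prop]
    refine ⟨fun hP => ?_, fun ⟨_, _, hP, _⟩ => hP⟩
    have hXP : X ≠ P := fun h => hX (h ▸ hP)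
    exact ⟨join X P hXP, PGmem_join_left hXP, hP, PGmem_join_right hXP⟩
  have hdisj : (pencil X : Set PGLine).PairwiseDisjoint (secantPts S) := by
    intro m hm m' hm' hne
    refine Set.disjoint_left.mpr fun P hP hP' => hX ?_
    rw [← eq_of_PGmem_of_PGmem hne hP.2 hP'.2 (mem_pencil.mp hm) (mem_pencil.mp hm')]
    exact hP.1
  conv_lhs => rw [hcover]
  rw [(Finset.finite_toSet _).ncard_biUnion (fun _ _ => Set.toFinite _) hdisj,
    finsum_mem_coe_finset]

open Classical in
noncomputable def tangentsThrough (S : Set PGPoint) (X : PGPoint) : Finset PGLine :=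
  {t ∈ pencil X | IsTangent S t}

def tangentPts (S : Set PGPoint) (X : PGPoint) : Set PGPoint :=
  {P | P ∈ S ∧ ∃ t : PGLine, PGmem P t ∧ IsTangent S t ∧ PGmem X t}

theorem mem_tangentsThrough {S : Set PGPoint} {X : PGPoint} {t : PGLine} :
    t ∈ tangentsThrough S X ↔ PGmem X t ∧ IsTangent S t := by
  simp [tangentsThrough, mem_pencil]

theorem ncard_tangentPts {S : Set PGPoint} {X : PGPoint} (hX : X ∉ S) :
    (tangentPts S X).ncard = (tangentsThrough S X).card := by
  have hne {P : PGPoint} (hP : P ∈ S) : X ≠ P := fun h => hX (h ▸ hP)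
  rw [← Set.ncard_coe_finset]
  refine Set.ncard_congr (fun P hP => join X P (hne hP.1)) ?_ ?_ ?_
  · rintro P ⟨-, t, hPt, ht, hXt⟩
    rw [join_eq _ hXt hPt]
    exact mem_tangentsThrough.mpr ⟨hXt, ht⟩
  · intro P P' hP hP' h
    obtain ⟨hPS, t, hPt, ht, hXt⟩ := hP
    have hP't : PGmem P' t := by
      rw [← join_eq (hne hPS) hXt hPt, h]
      exact PGmem_join_right _
    exact eq_of_isTangent ht hPS hPt hP'.1 hP't
  · intro t htX
    obtain ⟨hXt, ht⟩ := mem_tangentsThrough.mp htX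
    obtain ⟨P, hPS, hPt⟩ := Set.nonempty_of_ncard_ne_zero (s := secantPts S t) (by
      rw [show (secantPts S t).ncard = 1 from ht]; exact one_ne_zero)
    exact ⟨P, ⟨hPS, t, hPt, ht, hXt⟩, join_eq _ hXt hPt⟩

theorem two_mul_eleven_add_ncard_secantPts_le {S : Set PGPoint}
    (hS : ∀ L : PGLine, (secantPts S L).Nonempty) {ℓ : PGLine} (hℓ : ¬ IsTangent S ℓ)
    {X : PGPoint} (hXℓ : PGmem X ℓ) (hXS : X ∉ S) :
    2 * 11 + (secantPts S ℓ).ncard ≤ S.ncard + (tangentsThrough S X).card := by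
  classical
  have hℓX : ℓ ∈ pencil X := mem_pencil.mpr hXℓ
  have hsum := ncard_eq_sum_pencil hXS
  rw [← Finset.add_sum_erase _ _ hℓX] at hsum
  have hbound := Finset.two_mul_card_le_sum_add_card_filter_eq_one
    (s := (pencil X).erase ℓ) (f := fun m => (secantPts S m).ncard)
    (fun m _ => (Set.ncard_pos (Set.toFinite _)).mpr (hS m))
  have htangents : #{m ∈ (pencil X).erase ℓ | (secantPts S m).ncard = 1} =
      (tangentsThrough S X).card := by
    rw [Finset.filter_erase, Finset.erase_eq_of_notMem]
    · simp only [tangentsThrough, IsTangent, IsSecant]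
      congr
    · exact fun h => hℓ (Finset.mem_filter.mp h).2
  rw [Finset.card_erase_of_mem hℓX, card_pencil, htangents] at hbound
  omega

section OffLine

variable {S : Set PGPoint} {ℓ : PGLine}

theorem not_PGmem_of_mem_tangentPts (hℓ : ¬ IsTangent S ℓ) {X P : PGPoint} (hXℓ : PGmem X ℓ)
    (hXS : X ∉ S) (hP : P ∈ tangentPts S X) : ¬ PGmem P ℓ := by
  obtain ⟨hPS, t, hPt, ht, hXt⟩ := hP
  intro hPℓ
  have htℓ : t ≠ ℓ := fun h => hℓ (h ▸ ht)
  exact hXS (eq_of_PGmem_of_PGmem htℓ hXt hXℓ hPt hPℓ ▸ hPS)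

theorem setOf_tangent_not_PGmem_eq (hℓ : ¬ IsTangent S ℓ) {X : PGPoint} (hXℓ : PGmem X ℓ)
    (hXS : X ∉ S) :
    {P | P ∈ S ∧ ¬ PGmem P ℓ ∧ ∃ t : PGLine, PGmem P t ∧ IsTangent S t ∧ PGmem X t} =
      tangentPts S X := by
  ext P
  exact ⟨fun ⟨hPS, _, htan⟩ => ⟨hPS, htan⟩,
    fun hP => ⟨hP.1, not_PGmem_of_mem_tangentPts hℓ hXℓ hXS hP, hP.2⟩⟩

theorem exists_mem_tangentPts_of_not_PGmem (hS : IsSemioval S) {P : PGPoint} (hPS : P ∈ S)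
    (hPℓ : ¬ PGmem P ℓ) : ∃ X ∈ linePts ℓ \ S, P ∈ tangentPts S X := by
  obtain ⟨t, ⟨hPt, ht⟩, -⟩ := hS P hPS
  obtain ⟨X, hXt, hXℓ⟩ := exists_PGmem_PGmem t ℓ
  have hXP : X ≠ P := fun h => hPℓ (h ▸ hXℓ)
  exact ⟨X, ⟨hXℓ, fun hXS => hXP (eq_of_isTangent ht hXS hXt hPS hPt)⟩, hPS, t, hPt, ht, hXt⟩

theorem disjoint_tangentPts (hS : IsSemioval S) (hℓ : ¬ IsTangent S ℓ) {Q R : PGPoint}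
    (hQR : Q ≠ R) (hQℓ : PGmem Q ℓ) (hRℓ : PGmem R ℓ) :
    Disjoint (tangentPts S Q) (tangentPts S R) := by
  refine Set.disjoint_left.mpr fun P ⟨hPS, t, hPt, ht, hQt⟩ ⟨_, t', hPt', ht', hRt'⟩ => hℓ ?_
  obtain ⟨_, -, huniq⟩ := hS P hPS
  have htt' : t = t' := (huniq t ⟨hPt, ht⟩).trans (huniq t' ⟨hPt', ht'⟩).symm
  subst htt'
  rwa [← (join_eq hQR hQt hRt').symm.trans (join_eq hQR hQℓ hRℓ)]

theorem linePts_diff_eq_pair (hℓ : IsSecant S 10 ℓ) {Q R : PGPoint} (hQR : Q ≠ R)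
    (hQℓ : PGmem Q ℓ) (hRℓ : PGmem R ℓ) (hQS : Q ∉ S) (hRS : R ∉ S) :
    linePts ℓ \ S = {Q, R} := by
  have hcard : (linePts ℓ \ S).ncard = 2 := by
    have h := Set.ncard_inter_add_ncard_sdiff_eq_ncard (linePts ℓ) S (Set.toFinite _)
    rw [Set.inter_comm, show S ∩ linePts ℓ = secantPts S ℓ from rfl, hℓ, ncard_linePts] at h
    omega
  refine (Set.eq_of_subset_of_ncard_le ?_ ?_ (Set.toFinite _)).symm
  · rintro P (rfl | rfl)
    exacts [⟨hQℓ, hQS⟩, ⟨hRℓ, hRS⟩]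
  · rw [hcard, Set.ncard_pair hQR]

theorem tangentPts_union_tangentPts (hS : IsSemioval S) (hℓ : ¬ IsTangent S ℓ) {Q R : PGPoint}
    (hQR : linePts ℓ \ S = {Q, R}) :
    tangentPts S Q ∪ tangentPts S R = S \ linePts ℓ := by
  have hoff {X : PGPoint} (hX : X ∈ ({Q, R} : Set PGPoint)) {P : PGPoint}
      (hP : P ∈ tangentPts S X) : P ∈ S \ linePts ℓ := by
    rw [← hQR] at hX
    exact ⟨hP.1, not_PGmem_of_mem_tangentPts hℓ hX.1 hX.2 hP⟩
  ext P
  refine ⟨fun hP => hP.elim (hoff (by simp)) (hoff (by simp)), fun ⟨hPS, hPℓ⟩ => ?_⟩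
  obtain ⟨X, hX, hP⟩ := exists_mem_tangentPts_of_not_PGmem hS hPS hPℓ
  rw [hQR] at hX
  rcases hX with rfl | rfl
  exacts [Or.inl hP, Or.inr hP]

end OffLine

theorem SQ_SR_sizes (S : Set PGPoint) (hS : IsBlockingSemioval S) (hcard : S.ncard = 25)
    (ℓ : PGLine) (hℓ : IsSecant S 10 ℓ)
    (Q R : PGPoint) (hQR : Q ≠ R)
    (hQℓ : PGmem Q ℓ) (hRℓ : PGmem R ℓ) (hQS : Q ∉ S) (hRS : R ∉ S)
    (SQ : Set PGPoint)
    (hSQ : SQ = {P | P ∈ S ∧ ¬ PGmem P ℓ ∧ ∃ t : PGLine, PGmem P t ∧ IsTangent S t ∧ PGmem Q t})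
    (SR : Set PGPoint)
    (hSR : SR = {P | P ∈ S ∧ ¬ PGmem P ℓ ∧ ∃ t : PGLine, PGmem P t ∧ IsTangent S t ∧ PGmem R t}) :
    SQ.ncard + SR.ncard = 15 ∧ 7 ≤ SQ.ncard ∧ 7 ≤ SR.ncard ∧
      ((SQ.ncard = 7 ∧ SR.ncard = 8) ∨ (SQ.ncard = 8 ∧ SR.ncard = 7)) := by
  obtain ⟨⟨hblock, -⟩, hsemi⟩ := hS
  have hℓt : ¬ IsTangent S ℓ := fun h => by
    rw [IsTangent, IsSecant, hℓ] at h
    omega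
  rw [setOf_tangent_not_PGmem_eq hℓt hQℓ hQS] at hSQ
  rw [setOf_tangent_not_PGmem_eq hℓt hRℓ hRS] at hSR
  subst hSQ hSR
  have hoff : (S \ linePts ℓ).ncard = 15 := by
    have h := Set.ncard_inter_add_ncard_sdiff_eq_ncard S (linePts ℓ) (Set.toFinite _)
    rw [show S ∩ linePts ℓ = secantPts S ℓ from rfl, hℓ, hcard] at h
    omega
  have hsum : (tangentPts S Q).ncard + (tangentPts S R).ncard = 15 := by
    rw [← Set.ncard_union_eq (disjoint_tangentPts hsemi hℓt hQR hQℓ hRℓ),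
      tangentPts_union_tangentPts hsemi hℓt (linePts_diff_eq_pair hℓ hQR hQℓ hRℓ hQS hRS), hoff]
  have hQ := two_mul_eleven_add_ncard_secantPts_le hblock hℓt hQℓ hQS
  have hR := two_mul_eleven_add_ncard_secantPts_le hblock hℓt hRℓ hRS
  rw [← ncard_tangentPts hQS] at hQ
  rw [← ncard_tangentPts hRS] at hR
  rw [show (secantPts S ℓ).ncard = 10 from hℓ, hcard] at hQ hR
  omega
end

section
/- Let S be a blocking semioval with exactly 25 points in PG(2,11) such that no line meets S in more than 6 points (in particular S has no 10-secant). Then at least four points of S lie on exactly three 6-secants to S. -/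
/-! Let `N k` be the number of `k`-secants. Counting the 133 lines, the incident pairs (point of
`S`, line) and the pairs of distinct points of `S` on a common line gives `∑ N k = 133`,
`∑ k N k = 25 · 12` and `∑ k (k - 1) N k = 25 · 24`, while `N 0 = 0` (blocking) and `N 1 = 25`
(one tangent per point); together these force `N 6 ≥ 9`. The 12 lines through a point of `S`
carry the other 24 points and one of them is a tangent, so at most three of them are
6-secants. Counting incident pairs (point, 6-secant) then gives
`54 ≤ 6 N 6 ≤ 3 t + 2 (25 - t)`, where `t` is the number of points on three 6-secants. -/

open Module Submodule
open scoped LinearAlgebra.Projectivization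

section
variable {K V : Type*} [Field K] [AddCommGroup V] [Module K V] [FiniteDimensional K V]

theorem Submodule.finrank_comap_mkQ (p : Submodule K V) (U : Submodule K (V ⧸ p)) :
    finrank K (U.comap p.mkQ) = finrank K U + finrank K p := by
  have hW := (U.comap p.mkQ).finrank_quotient_add_finrank
  have hU := U.finrank_quotient_add_finrank
  have hp := p.finrank_quotient_add_finrank
  have e := (quotientQuotientEquivQuotient p (U.comap p.mkQ) (le_comap_mkQ p U)).finrank_eq
  rw [map_comap_eq_self (by simp)] at e
  omega

noncomputable def Submodule.finrankEqEquivQuotient (p : Submodule K V) {m n : ℕ}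
    (h : m = n + finrank K p) :
    {W : {W : Submodule K V // finrank K W = m} // p ≤ W.1} ≃
      {U : Submodule K (V ⧸ p) // finrank K U = n} where
  toFun W := ⟨W.1.1.map p.mkQ, by
    have := p.finrank_comap_mkQ (W.1.1.map p.mkQ)
    rw [comap_map_mkQ, sup_eq_right.2 W.2, W.1.2] at this
    omega⟩
  invFun U := ⟨⟨U.1.comap p.mkQ, by rw [finrank_comap_mkQ, U.2, h]⟩, le_comap_mkQ p U.1⟩
  left_inv W := by
    ext : 2
    simp [comap_map_mkQ, W.2]
  right_inv U := Subtype.ext (map_comap_eq_self (by simp))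

noncomputable def Subspace.finrankEqEquivDual {m n : ℕ} (h : m + n = finrank K V) :
    {W : Subspace K V // finrank K W = m} ≃ {Φ : Subspace K (Dual K V) // finrank K Φ = n} where
  toFun W := ⟨W.1.dualAnnihilator, by
    have := W.1.finrank_add_finrank_dualAnnihilator_eq
    omega⟩
  invFun Φ := ⟨Φ.1.dualCoannihilator, by
    have := Φ.1.finrank_add_finrank_dualCoannihilator_eq
    omega⟩
  left_inv W := Subtype.ext Subspace.dualAnnihilator_dualCoannihilator_eq
  right_inv Φ := Subtype.ext Subspace.dualCoannihilator_dualAnnihilator_eq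

namespace Projectivization

theorem card_lines_of_finrank_three [Finite K] (hV : finrank K V = 3) :
    Nat.card {W : Submodule K V // finrank K W = 2} = Nat.card K ^ 2 + Nat.card K + 1 := by
  have hdual : finrank K (Dual K V) = 3 := by rw [Subspace.dual_finrank_eq, hV]
  rw [Nat.card_congr ((Subspace.finrankEqEquivDual (by rw [hV])).trans (equivSubmodule K _).symm),
    card_of_finrank K _ hdual]
  simp [Finset.sum_range_succ]
  ring

theorem card_lines_through_of_finrank_three [Finite K] (hV : finrank K V = 3) (x : ℙ K V) :
    Nat.card {W : {W : Submodule K V // finrank K W = 2} // x.submodule ≤ W.1} =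
      Nat.card K + 1 := by
  have hquot : finrank K (V ⧸ x.submodule) = 2 := by
    have := x.submodule.finrank_quotient_add_finrank
    rw [x.finrank_submodule, hV] at this
    omega
  rw [Nat.card_congr ((x.submodule.finrankEqEquivQuotient (by rw [x.finrank_submodule])).trans
    (equivSubmodule K _).symm), card_of_finrank_two K _ hquot]

end Projectivization
end

theorem Projectivization.existsUnique_line {K V : Type*} [DivisionRing K]
    [AddCommGroup V] [Module K V] {x y : ℙ K V} (hxy : x ≠ y) :
    ∃! W : {W : Submodule K V // finrank K W = 2}, x.submodule ≤ W.1 ∧ y.submodule ≤ W.1 := by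
  induction x using ind with | h v hv =>
  induction y using ind with | h w hw =>
  rw [← independent_pair_iff_ne, independent_mk_iff_LinearIndependent] at hxy
  refine ⟨⟨span K {v, w}, ?_⟩, ?_, ?_⟩
  · rw [← Matrix.range_cons_cons_empty v w ![], finrank_span_eq_card hxy]
    simp
  · simp only [submodule_mk, span_singleton_le_iff_mem]
    exact ⟨subset_span (by simp), subset_span (by simp)⟩
  · rintro ⟨W, hW⟩ ⟨hvW, hwW⟩
    simp_rw [← mem_projectivization_iff_submodule_le] at hvW hwW
    exact Subtype.ext (line_unique' hv hw hxy W hW hvW hwW)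

open Finset

theorem Finset.sum_eq_sum_range_mul_card_fiber {β : Type*} (t : Finset β) (f : β → ℕ) {n : ℕ}
    (hf : ∀ b ∈ t, f b < n) (g : ℕ → ℕ) :
    ∑ b ∈ t, g (f b) = ∑ k ∈ range n, g k * #{b ∈ t | f b = k} := by
  rw [← sum_fiberwise_of_maps_to (g := f) (fun b hb => mem_range.2 (hf b hb))]
  refine sum_congr rfl fun k _ => ?_
  rw [sum_congr rfl fun b hb => congrArg g (mem_filter.1 hb).2, sum_const, smul_eq_mul, mul_comm]

section DoubleCounting
variable {α β : Type*} [Fintype β] {r : α → β → Prop} [∀ a b, Decidable (r a b)] {s : Finset α}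

theorem sum_card_filter_and_eq_sum_card_filter (p : β → Prop) [DecidablePred p] :
    ∑ a ∈ s, #{b | r a b ∧ p b} = ∑ b with p b, #{a ∈ s | r a b} := by
  have hswap := sum_card_bipartiteAbove_eq_sum_card_bipartiteBelow (r := r) (s := s)
    (t := {b | p b})
  simp only [bipartiteAbove, bipartiteBelow, filter_filter] at hswap
  simpa only [and_comm] using hswap

theorem sum_card_mul_pred_eq_of_existsUnique
    (hline : ∀ a ∈ s, ∀ c ∈ s, a ≠ c → ∃! b, r a b ∧ r c b) :
    ∑ b, #{a ∈ s | r a b} * (#{a ∈ s | r a b} - 1) = #s * (#s - 1) := by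
  have hpair : ∀ x ∈ s.offDiag, #{b | r x.1 b ∧ r x.2 b} = 1 := fun x hx => by
    obtain ⟨ha, hc, hac⟩ := mem_offDiag.1 hx
    exact (Fintype.existsUnique_iff_card_one _).1 (hline _ ha _ hc hac)
  have hdiag : ∀ b, #{a ∈ s | r a b} * (#{a ∈ s | r a b} - 1) =
      #{x ∈ s.offDiag | r x.1 b ∧ r x.2 b} := fun b => by
    rw [Nat.mul_sub_one, ← offDiag_card]
    congr 1
    ext x
    simp only [mem_offDiag, mem_filter]
    tauto
  calc ∑ b, #{a ∈ s | r a b} * (#{a ∈ s | r a b} - 1)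
      = ∑ x ∈ s.offDiag, #{b | r x.1 b ∧ r x.2 b} := by
        simp_rw [hdiag]
        exact (sum_card_bipartiteAbove_eq_sum_card_bipartiteBelow
          (r := fun (x : α × α) b => r x.1 b ∧ r x.2 b)).symm
    _ = #s * (#s - 1) := by
        rw [sum_congr rfl hpair, sum_const, smul_eq_mul, mul_one, offDiag_card, Nat.mul_sub_one]

theorem sum_card_of_mem_of_existsUnique [DecidableEq α]
    (hline : ∀ a ∈ s, ∀ c ∈ s, a ≠ c → ∃! b, r a b ∧ r c b) {a : α} (ha : a ∈ s) :
    ∑ b with r a b, #{c ∈ s | r c b} = #{b | r a b} + (#s - 1) := by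
  have hother : ∀ c ∈ s.erase a, #{b | r c b ∧ r a b} = 1 := fun c hc => by
    rw [← Fintype.existsUnique_iff_card_one]
    exact hline c (mem_of_mem_erase hc) a ha (ne_of_mem_erase hc)
  rw [← sum_card_filter_and_eq_sum_card_filter, ← add_sum_erase s _ ha, sum_congr rfl hother]
  simp [card_erase_of_mem ha]

end DoubleCounting

/-- Summing `(k - 2) (k - 5) N k` gives `2 N 6 = 15 + N 3 + N 4`, and `N 6 = 8` is excluded by
integrality of the remaining equations. -/
theorem nine_le_six_secants_of_distribution (N : ℕ → ℕ) (h0 : N 0 = 0) (h1 : N 1 = 25)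
    (hN : ∑ k ∈ range 7, N k = 133) (hN1 : ∑ k ∈ range 7, k * N k = 300)
    (hN2 : ∑ k ∈ range 7, k * (k - 1) * N k = 600) : 9 ≤ N 6 := by
  simp only [sum_range_succ, sum_range_zero] at hN hN1 hN2
  omega

/-- Over `ℤ`, `∑ k, (k - 2) n k = 12`; with `n 0 = 0` and `n 1 = 1` this gives `4 n 6 ≤ 13`. -/
theorem le_three_of_distribution_through_point (n : ℕ → ℕ) (h0 : n 0 = 0) (h1 : n 1 = 1)
    (hn : ∑ k ∈ range 7, n k = 12) (hn1 : ∑ k ∈ range 7, k * n k = 36) : n 6 ≤ 3 := by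
  simp only [sum_range_succ, sum_range_zero] at hn hn1
  omega

theorem Finset.sum_le_two_mul_card_add_card_filter_eq_three {ι : Type*} {s : Finset ι}
    {f : ι → ℕ} (hf : ∀ i ∈ s, f i ≤ 3) : ∑ i ∈ s, f i ≤ 2 * #s + #{i ∈ s | f i = 3} := by
  calc ∑ i ∈ s, f i ≤ ∑ i ∈ s, (2 + if f i = 3 then 1 else 0) :=
        sum_le_sum fun i hi => by have := hf i hi; split_ifs <;> omega
    _ = 2 * #s + #{i ∈ s | f i = 3} := by
        rw [sum_add_distrib, sum_const, smul_eq_mul, mul_comm, sum_boole, Nat.cast_id]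

section SecantDistribution
variable {α β : Type*} [Fintype β] {r : α → β → Prop} [∀ a b, Decidable (r a b)] {s : Finset α}

theorem nine_le_card_six_secants (hline : ∀ a ∈ s, ∀ c ∈ s, a ≠ c → ∃! b, r a b ∧ r c b)
    (hβ : Fintype.card β = 133) (hdeg : ∀ a ∈ s, #{b | r a b} = 12) (hs : #s = 25)
    (hpos : ∀ b, 0 < #{a ∈ s | r a b}) (hle : ∀ b, #{a ∈ s | r a b} ≤ 6)
    (htan : ∀ a ∈ s, ∃! b, r a b ∧ #{c ∈ s | r c b} = 1) :
    9 ≤ #{b | #{a ∈ s | r a b} = 6} := by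
  set m : β → ℕ := fun b => #{a ∈ s | r a b}
  have hfib := sum_eq_sum_range_mul_card_fiber univ m (n := 7) fun b _ => Nat.lt_succ_of_le (hle b)
  have hswap := sum_card_bipartiteAbove_eq_sum_card_bipartiteBelow (r := r) (s := s) (t := univ)
  simp only [bipartiteAbove, bipartiteBelow] at hswap
  apply nine_le_six_secants_of_distribution fun k => #{b | m b = k}
  · rw [card_eq_zero, filter_eq_empty_iff]
    exact fun b _ => (hpos b).ne'
  · calc #{b | m b = 1} = ∑ b with m b = 1, m b := by
          rw [card_eq_sum_ones]
          exact sum_congr rfl fun b hb => (mem_filter.1 hb).2.symm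
      _ = ∑ a ∈ s, #{b | r a b ∧ m b = 1} := by
          rw [sum_card_filter_and_eq_sum_card_filter]
      _ = 25 := by
          rw [sum_congr rfl fun a ha => (Fintype.existsUnique_iff_card_one _).1 (htan a ha)]
          simp [hs]
  · simpa [hβ] using (hfib fun _ => 1).symm
  · refine (hfib fun k => k).symm.trans ?_
    rw [← hswap, sum_congr rfl hdeg]
    simp [hs]
  · rw [← hfib fun k => k * (k - 1), sum_card_mul_pred_eq_of_existsUnique hline, hs]

theorem card_six_secants_through_le_three [DecidableEq α]
    (hline : ∀ a ∈ s, ∀ c ∈ s, a ≠ c → ∃! b, r a b ∧ r c b) (hs : #s = 25)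
    (hpos : ∀ b, 0 < #{a ∈ s | r a b}) (hle : ∀ b, #{a ∈ s | r a b} ≤ 6) {a : α} (ha : a ∈ s)
    (hdeg : #{b | r a b} = 12) (htan : ∃! b, r a b ∧ #{c ∈ s | r c b} = 1) :
    #{b | r a b ∧ #{c ∈ s | r c b} = 6} ≤ 3 := by
  set m : β → ℕ := fun b => #{c ∈ s | r c b}
  have hfib := sum_eq_sum_range_mul_card_fiber {b | r a b} m (n := 7)
    fun b _ => Nat.lt_succ_of_le (hle b)
  simp only [filter_filter] at hfib
  apply le_three_of_distribution_through_point fun k => #{b | r a b ∧ m b = k}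
  · rw [card_eq_zero, filter_eq_empty_iff]
    exact fun b _ hb => (hpos b).ne' hb.2
  · exact (Fintype.existsUnique_iff_card_one _).1 htan
  · simpa [hdeg] using (hfib fun _ => 1).symm
  · refine (hfib fun k => k).symm.trans ?_
    rw [sum_card_of_mem_of_existsUnique hline ha, hdeg, hs]

theorem four_le_card_three_six_secants_through [DecidableEq α]
    (hline : ∀ a ∈ s, ∀ c ∈ s, a ≠ c → ∃! b, r a b ∧ r c b)
    (hβ : Fintype.card β = 133) (hdeg : ∀ a ∈ s, #{b | r a b} = 12) (hs : #s = 25)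
    (hpos : ∀ b, 0 < #{a ∈ s | r a b}) (hle : ∀ b, #{a ∈ s | r a b} ≤ 6)
    (htan : ∀ a ∈ s, ∃! b, r a b ∧ #{c ∈ s | r c b} = 1) :
    4 ≤ #{a ∈ s | #{b | r a b ∧ #{c ∈ s | r c b} = 6} = 3} := by
  have hsix := nine_le_card_six_secants hline hβ hdeg hs hpos hle htan
  have hflags : ∑ a ∈ s, #{b | r a b ∧ #{c ∈ s | r c b} = 6} =
      6 * #{b | #{a ∈ s | r a b} = 6} := by
    rw [sum_card_filter_and_eq_sum_card_filter, sum_congr rfl fun b hb => (mem_filter.1 hb).2,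
      sum_const, smul_eq_mul, mul_comm]
  have hbound := sum_le_two_mul_card_add_card_filter_eq_three fun a ha =>
    card_six_secants_through_le_three hline hs hpos hle ha (hdeg a ha) (htan a ha)
  omega

end SecantDistribution

theorem card_PGLine : Nat.card PGLine = 133 := by
  rw [Projectivization.card_lines_of_finrank_three (finrank_fin_fun _), Nat.card_zmod]
  norm_num

theorem card_PGLine_through (P : PGPoint) : Nat.card {L : PGLine // PGmem P L} = 12 := by
  simp only [PGmem]
  rw [Projectivization.card_lines_through_of_finrank_three (finrank_fin_fun _),
    Nat.card_zmod]

theorem existsUnique_PGLine {P Q : PGPoint} (hPQ : P ≠ Q) : ∃! L : PGLine, PGmem P L ∧ PGmem Q L :=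
  Projectivization.existsUnique_line hPQ

theorem at_least_four_points_on_three_6_secants (S : Set PGPoint) (hS : IsBlockingSemioval S) (hcard : S.ncard = 25)
    (hmax : ∀ L : PGLine, (secantPts S L).ncard ≤ 6) :
    4 ≤ ({P ∈ S | ({L : PGLine | PGmem P L ∧ IsSecant S 6 L}).ncard = 3}).ncard := by
  classical
  obtain ⟨⟨hmeets, -⟩, hsemi⟩ := hS
  have := Fintype.ofFinite PGLine
  set s := (Set.toFinite S).toFinset
  have hsec : ∀ L, (secantPts S L).ncard = #{P ∈ s | PGmem P L} := fun L => by
    rw [← Set.ncard_coe_finset]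
    congr
    ext P
    simp [secantPts, s]
  have hgoal : {P ∈ S | {L : PGLine | PGmem P L ∧ IsSecant S 6 L}.ncard = 3} =
      ↑{P ∈ s | #{L | PGmem P L ∧ #{Q ∈ s | PGmem Q L} = 6} = 3} := by
    ext P
    simp [s, IsSecant, hsec, ← Set.ncard_coe_finset]
  rw [hgoal, Set.ncard_coe_finset]
  refine four_le_card_three_six_secants_through
    (fun P _ Q _ hPQ => existsUnique_PGLine hPQ) ?_ ?_ ?_ ?_ ?_ ?_
  · rw [Fintype.card_eq_nat_card, card_PGLine]
  · intro P _
    rw [← Fintype.card_subtype, Fintype.card_eq_nat_card, card_PGLine_through]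
  · rwa [← Set.ncard_eq_toFinset_card]
  · intro L
    rw [← hsec]
    exact (Set.ncard_pos (Set.toFinite _)).2 (hmeets L)
  · intro L
    rw [← hsec]
    exact hmax L
  · intro P hP
    simpa [IsTangent, IsSecant, hsec] using hsemi P ((Set.Finite.mem_toFinset _).1 hP)
end
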